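/- arXiv:2010.00557 — 3 statements merged into one kernel-verified Lean document; each statement's English description precedes it below -/
import Mathlib

section
/- Condition (A3) is equivalent to the following statement: there exists a constant ε ∈ (0, √2/2) such that g · S₊^{d−1} ⊂ S_{+,ε}^{d−1} for every g ∈ supp μ, where g · S₊^{d−1} = {g·x : x ∈ S₊^{d−1}} and S_{+,ε}^{d−1} = {x ∈ S₊^{d−1} : ⟨x, e_j⟩ ≥ ε for all 1 ≤ j ≤ d}. -/
open MeasureTheory ProbabilityTheory Filter Set Real Topology
open scoped ENNReal NNReal

noncomputable section

namespace PRM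

variable (d : ℕ)

abbrev Vec := EuclideanSpace ℝ (Fin d)
abbrev Mat := Matrix (Fin d) (Fin d) ℝ

instance : MeasurableSpace (Mat d) := inferInstanceAs (MeasurableSpace (Fin d → Fin d → ℝ))

/-- The positive part of the unit sphere `S₊^{d-1}`. -/
def Spos : Set (Vec d) := {x | (∀ i, 0 ≤ x i) ∧ ‖x‖ = 1}

/-- The interior `(S₊^{d-1})°` of the positive part of the unit sphere. -/
def SposInt : Set (Vec d) := {x | (∀ i, 0 < x i) ∧ ‖x‖ = 1}

variable {d}

/-- Matrix-vector multiplication, valued in Euclidean space. -/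
def mulVecE (gm : Mat d) (x : Vec d) : Vec d := WithLp.toLp 2 (gm.mulVec x)

/-- Operator norm `‖g‖ = sup_{x ∈ S₊^{d-1}} |gx|` (for nonnegative matrices this is
the usual operator norm). -/
def opN (gm : Mat d) : ℝ := ⨆ x : Spos d, ‖mulVecE gm (x : Vec d)‖

/-- `ι(g) = inf_{x ∈ S₊^{d-1}} |gx|`. -/
def iotaN (gm : Mat d) : ℝ := ⨅ x : Spos d, ‖mulVecE gm (x : Vec d)‖

/-- `N(g) = max (‖g‖, ι(g)⁻¹)`. -/
def NN (gm : Mat d) : ℝ := max (opN gm) (iotaN gm)⁻¹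

/-- Projective action `g ⬝ x = gx/|gx|`. -/
def proj (gm : Mat d) (x : Vec d) : Vec d := ‖mulVecE gm x‖⁻¹ • mulVecE gm x

/-- A nonnegative matrix is allowable if every row and every column has a positive entry. -/
def Allowable (gm : Mat d) : Prop := (∀ i, ∃ j, 0 < gm i j) ∧ (∀ j, ∃ i, 0 < gm i j)

/-- Spectral radius via the Gelfand formula `ρ(g) = inf_k ‖g^k‖^{1/k}`. -/
def specRad (gm : Mat d) : ℝ := ⨅ k : {k : ℕ // 0 < k}, opN (gm ^ (k : ℕ)) ^ (((k : ℕ) : ℝ))⁻¹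

/-- The product `G_n = g_n ⋯ g_1`. -/
def Gprod {Ω : Type*} (g : ℕ → Ω → Mat d) (n : ℕ) (ω : Ω) : Mat d :=
  ((List.range n).map fun i => g (n - i) ω).prod

/-- The smallest closed multiplicative subsemigroup containing `S`. -/
def cSemigroup (S : Set (Mat d)) : Set (Mat d) :=
  ⋂₀ {T : Set (Mat d) | IsClosed T ∧ S ⊆ T ∧ ∀ a ∈ T, ∀ b ∈ T, a * b ∈ T}

/-- Support of a measure. -/
def measSupp {α : Type*} [TopologicalSpace α] [MeasurableSpace α] (m : Measure α) : Set α :=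
  {a | ∀ U : Set α, IsOpen U → a ∈ U → 0 < m U}

/-- `m(x,y) = sup{α > 0 : α y ≤ x componentwise}`. -/
def mRatio (x y : Vec d) : ℝ := sSup {a : ℝ | 0 < a ∧ ∀ i, a * y i ≤ x i}

/-- The Hilbert cross-ratio metric on `S₊^{d-1}`. -/
def dHilb (x y : Vec d) : ℝ :=
  (1 - mRatio x y * mRatio y x) / (1 + mRatio x y * mRatio y x)

/-- The set of Hölder quotients `|φ(x) − φ(y)|/𝐝(x,y)^γ`. -/
def holderSet (γ : ℝ) (φ : Vec d → ℝ) : Set ℝ :=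
  {r | ∃ x ∈ Spos d, ∃ y ∈ Spos d, x ≠ y ∧ r = |φ x - φ y| / dHilb x y ^ γ}

/-- `‖φ‖_∞` over the positive sphere. -/
def supNorm (φ : Vec d → ℝ) : ℝ := sSup ((fun x => |φ x|) '' Spos d)

/-- The γ-Hölder norm `‖φ‖_γ = ‖φ‖_∞ + [φ]_γ`. -/
def hNorm (γ : ℝ) (φ : Vec d → ℝ) : ℝ := supNorm φ + sSup (holderSet γ φ)

/-- Membership in the Banach space `B_γ`. -/
def MemB (γ : ℝ) (φ : Vec d → ℝ) : Prop :=
  ContinuousOn φ (Spos d) ∧ BddAbove (holderSet γ φ)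

/-- The standard normal distribution function `Φ`. -/
def stdGaussCDF (y : ℝ) : ℝ :=
  (Real.sqrt (2 * π))⁻¹ * ∫ t in Iic y, Real.exp (-(t ^ 2) / 2)

variable {Ω : Type*} [MeasurableSpace Ω]

/-- Condition (A1): exponential moment condition. -/
def CondA1 (P : Measure Ω) (g : ℕ → Ω → Mat d) : Prop :=
  ∃ η : ℝ, 0 < η ∧ η < 1 ∧ Integrable (fun ω => NN (g 1 ω) ^ η) P

/-- Condition (A2): allowability and positivity. -/
def CondA2 (μm : Measure (Mat d)) : Prop :=
  (∀ a ∈ cSemigroup (measSupp μm), Allowable a) ∧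
  ∃ a ∈ cSemigroup (measSupp μm), ∀ i j, 0 < a i j

/-- Condition (A3): columns of matrices in the support of `μ` have comparable entries. -/
def CondA3 (μm : Measure (Mat d)) : Prop :=
  ∃ C : ℝ, 1 < C ∧ ∀ a ∈ measSupp μm, (∀ i j : Fin d, 0 < a i j) ∧
    ∀ j i i' : Fin d, a i j ≤ C * a i' j

/-- Condition (A4): harmonic moments of the entries. -/
def CondA4 (P : Measure Ω) (g : ℕ → Ω → Mat d) : Prop :=
  ∀ i j : Fin d, ∃ δ : ℝ, 0 < δ ∧ Integrable (fun ω => g 1 ω i j ^ (-δ)) P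

/-- The sequence `g` is i.i.d. with common law `μ`. -/
def IsIID (P : Measure Ω) (g : ℕ → Ω → Mat d) (μm : Measure (Mat d)) : Prop :=
  (∀ n, Measurable (g n)) ∧ (∀ n, 1 ≤ n → Measure.map (g n) P = μm) ∧
  iIndepFun g P

/-- `lam` is the upper Lyapunov exponent. -/
def IsLyap (P : Measure Ω) (g : ℕ → Ω → Mat d) (lam : ℝ) : Prop :=
  ∀ᵐ ω ∂P, Tendsto (fun n : ℕ => Real.log (opN (Gprod g n ω)) / n) atTop (𝓝 lam)

/-- `s2` is the asymptotic variance `σ²`. -/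
def IsVar (P : Measure Ω) (g : ℕ → Ω → Mat d) (lam s2 : ℝ) : Prop :=
  ∀ x ∈ Spos d, Tendsto (fun n : ℕ =>
    (∫ ω, (Real.log ‖mulVecE (Gprod g n ω) x‖ - n * lam) ^ 2 ∂P) / n) atTop (𝓝 s2)

/-- `ν` is the unique stationary measure of the Markov chain `X_n^x` on `S₊^{d-1}`. -/
def IsStatMeas (P : Measure Ω) (g : ℕ → Ω → Mat d) (ν : Measure (Vec d)) : Prop :=
  IsProbabilityMeasure ν ∧ ν (Spos d) = 1 ∧
  ∀ φ : Vec d → ℝ, Continuous φ →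
    (∫ x, ∫ ω, φ (proj (g 1 ω) x) ∂P ∂ν) = ∫ x, φ x ∂ν

/-- Condition (A5'): non-arithmeticity. -/
def CondA5' (μm : Measure (Mat d)) (ν : Measure (Vec d)) : Prop :=
  ∀ (t θ : ℝ) (φ : Vec d → ℝ), 0 < t → 0 ≤ θ → θ < 2 * π →
    ¬ ∀ a ∈ cSemigroup (measSupp μm), ∀ x ∈ measSupp ν,
      Complex.exp (Complex.I * t * Real.log ‖mulVecE a x‖) * (φ (proj a x) : ℂ)
        = Complex.exp (Complex.I * θ) * (φ x : ℂ)

/-- `κ` is, for `|s| < η`, the dominating eigenvalue of the transfer operator `P_s`,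
witnessed by a continuous positive eigenfunction. -/
def IsEigen (P : Measure Ω) (g : ℕ → Ω → Mat d) (η : ℝ) (κ : ℝ → ℝ) : Prop :=
  κ 0 = 1 ∧ ∀ s : ℝ, |s| < η → 0 < κ s ∧ ∃ r : Vec d → ℝ,
    ContinuousOn r (Spos d) ∧ (∀ x ∈ Spos d, 0 < r x) ∧
    ∀ x ∈ Spos d, (∫ ω, ‖mulVecE (g 1 ω) x‖ ^ s * r (proj (g 1 ω) x) ∂P) = κ s * r x

/-- Local Legendre transform of `Λ` over `{|s| < η}`. -/
def LegendreLoc (L : ℝ → ℝ) (η q : ℝ) : ℝ := sSup {u | ∃ s : ℝ, |s| < η ∧ u = s * q - L s}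

/-- `ζ` is the Cramér series of `Λ`: it is analytic at `0` and satisfies
`t³ ζ(t) = t²/2 − Λ*(λ + σ t)` for `t` small. -/
def IsCramerSeries (L : ℝ → ℝ) (η lam σ : ℝ) (ζ : ℝ → ℝ) : Prop :=
  AnalyticAt ℝ ζ 0 ∧ ∃ ε : ℝ, 0 < ε ∧ ∀ t : ℝ, |t| < ε →
    t ^ 3 * ζ t = t ^ 2 / 2 - LegendreLoc L η (lam + σ * t)


lemma coord_le_norm' (x : Vec d) (i : Fin d) : x i ≤ ‖x‖ := by
  have h1 : x i ≤ |x i| := le_abs_self _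
  have h2 : |x i| ≤ ‖x‖ := by
    rw [EuclideanSpace.norm_eq, ← Real.sqrt_sq_eq_abs]
    apply Real.sqrt_le_sqrt
    have hx : (x i) ^ 2 = ‖x i‖ ^ 2 := by rw [Real.norm_eq_abs, sq_abs]
    rw [hx]
    exact Finset.single_le_sum (f := fun k => ‖x k‖ ^ 2)
      (fun k _ => sq_nonneg _) (Finset.mem_univ i)
  linarith

lemma mulVecE_single (a : Mat d) (j : Fin d) (i : Fin d) :
    mulVecE a (EuclideanSpace.single j (1 : ℝ)) i = a i j := by
  simp [mulVecE, Matrix.mulVec, dotProduct, EuclideanSpace.single_apply,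
    mul_ite]

lemma single_mem_Spos (j : Fin d) :
    (EuclideanSpace.single j (1 : ℝ)) ∈ Spos d := by
  constructor
  · intro i
    rw [EuclideanSpace.single_apply]
    split <;> norm_num
  · simp [EuclideanSpace.norm_single]

/-- **Lemma (equivalent form of condition (A3)).**
Condition (A3) holds iff there is `ε ∈ (0, √2/2)` such that for every `g ∈ supp μ`,
`g · S₊^{d−1} ⊆ S₊,ε^{d−1} = {x ∈ S₊^{d−1} : ⟨x, e_j⟩ ≥ ε for all j}`. -/
theorem condA3_iff_uniform_interior
    {d : ℕ} (hd : 2 ≤ d)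
    (μm : Measure (Mat d)) [IsProbabilityMeasure μm] :
    CondA3 μm ↔
      ∃ ε : ℝ, 0 < ε ∧ ε < Real.sqrt 2 / 2 ∧
        ∀ a ∈ measSupp μm, ∀ x ∈ Spos d,
          proj a x ∈ Spos d ∧ ∀ j : Fin d, ε ≤ proj a x j := by
  have hs2 : (0:ℝ) < Real.sqrt 2 := Real.sqrt_pos.mpr (by norm_num)
  have hsqrt2 : Real.sqrt 2 / 2 = (Real.sqrt 2)⁻¹ := by
    rw [inv_eq_one_div, div_eq_div_iff (by norm_num) (ne_of_gt hs2),
      Real.mul_self_sqrt (by norm_num), one_mul]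
  have h2d : Real.sqrt 2 ≤ Real.sqrt d := Real.sqrt_le_sqrt (by exact_mod_cast hd)
  constructor
  · rintro ⟨C, hC1, hC⟩
    have hCd : Real.sqrt 2 < C * Real.sqrt d := by nlinarith
    have hCd0 : (0:ℝ) < C * Real.sqrt d := lt_trans hs2 hCd
    refine ⟨(C * Real.sqrt d)⁻¹, inv_pos.mpr hCd0, ?_, ?_⟩
    · rw [hsqrt2]
      exact inv_strictAnti₀ hs2 hCd
    · intro a ha x hx
      obtain ⟨hpos, hcomp⟩ := hC a ha
      obtain ⟨hx0, hx1⟩ := hx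
      set v := mulVecE a x with hv
      have hxne : ∃ j0, 0 < x j0 := by
        by_contra hcon
        push_neg at hcon
        have hz : x = 0 := by
          ext j
          exact le_antisymm (hcon j) (hx0 j)
        rw [hz] at hx1
        simp at hx1
      obtain ⟨j0, hj0⟩ := hxne
      have hvpos : ∀ i, 0 < v i := by
        intro i
        have hvi : v i = ∑ j, a i j * x j := rfl
        rw [hvi]
        apply Finset.sum_pos' (fun j _ => mul_nonneg (le_of_lt (hpos i j)) (hx0 j))
        exact ⟨j0, Finset.mem_univ j0, mul_pos (hpos i j0) hj0⟩
      have hvne : v ≠ 0 := by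
        intro hcon
        have h0 := hvpos ⟨0, by omega⟩
        rw [hcon] at h0
        simp at h0
      have hvn : 0 < ‖v‖ := norm_pos_iff.mpr hvne
      have key : ∀ i, ‖v‖ ≤ C * Real.sqrt d * v i := by
        intro i
        have hle : ∀ i', v i' ≤ C * v i := by
          intro i'
          have h1 : v i' = ∑ j, a i' j * x j := rfl
          have h2 : C * v i = ∑ j, C * (a i j * x j) := by
            rw [← Finset.mul_sum]; rfl
          rw [h1, h2]
          apply Finset.sum_le_sum
          intro j _
          rw [← mul_assoc]
          exact mul_le_mul_of_nonneg_right (hcomp j i' i) (hx0 j)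
        have hcv : 0 < C * v i := mul_pos (lt_trans one_pos hC1) (hvpos i)
        have hsq : ‖v‖ ^ 2 ≤ (d : ℝ) * (C * v i) ^ 2 := by
          rw [EuclideanSpace.norm_eq, Real.sq_sqrt (by positivity)]
          calc ∑ i', ‖v i'‖ ^ 2 ≤ ∑ _i' : Fin d, (C * v i) ^ 2 := by
                apply Finset.sum_le_sum
                intro i' _
                rw [Real.norm_eq_abs, sq_abs]
                apply sq_le_sq' _ (hle i')
                have hv' : (0:ℝ) < v i' := hvpos i'
                linarith
            _ = (d : ℝ) * (C * v i) ^ 2 := by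
                rw [Finset.sum_const, Finset.card_univ, Fintype.card_fin,
                  nsmul_eq_mul]
        calc ‖v‖ = Real.sqrt (‖v‖ ^ 2) := (Real.sqrt_sq (le_of_lt hvn)).symm
          _ ≤ Real.sqrt ((d : ℝ) * (C * v i) ^ 2) := Real.sqrt_le_sqrt hsq
          _ = Real.sqrt d * (C * v i) := by
              rw [Real.sqrt_mul (by positivity), Real.sqrt_sq (le_of_lt hcv)]
          _ = C * Real.sqrt d * v i := by ring
      have hproj : ∀ i, proj a x i = ‖v‖⁻¹ * v i := fun i => rfl
      refine ⟨⟨fun i => ?_, ?_⟩, fun i => ?_⟩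
      · rw [hproj i]
        exact mul_nonneg (inv_nonneg.mpr (le_of_lt hvn)) (le_of_lt (hvpos i))
      · show ‖‖v‖⁻¹ • v‖ = 1
        rw [norm_smul, Real.norm_eq_abs, abs_inv, abs_norm,
          inv_mul_cancel₀ (ne_of_gt hvn)]
      · rw [hproj i]
        have h1 : (C * Real.sqrt d)⁻¹ * ‖v‖ ≤ v i := by
          have h2 := mul_le_mul_of_nonneg_left (key i)
            (le_of_lt (inv_pos.mpr hCd0))
          rwa [← mul_assoc, inv_mul_cancel₀ (ne_of_gt hCd0), one_mul] at h2
        calc (C * Real.sqrt d)⁻¹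
            = ‖v‖⁻¹ * ((C * Real.sqrt d)⁻¹ * ‖v‖) := by
              rw [mul_comm ((C * Real.sqrt d)⁻¹) ‖v‖, ← mul_assoc,
                inv_mul_cancel₀ (ne_of_gt hvn), one_mul]
          _ ≤ ‖v‖⁻¹ * v i :=
              mul_le_mul_of_nonneg_left h1 (inv_nonneg.mpr (le_of_lt hvn))
  · rintro ⟨ε, hε0, hεlt, h⟩
    have hε1 : ε < 1 := by
      have hlt1 : Real.sqrt 2 / 2 < 1 := by
        rw [div_lt_one (by norm_num : (0:ℝ) < 2)]
        calc Real.sqrt 2 < Real.sqrt 4 := by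
              apply Real.sqrt_lt_sqrt <;> norm_num
          _ = 2 := by
              rw [show (4:ℝ) = 2 ^ 2 by norm_num, Real.sqrt_sq (by norm_num)]
      linarith
    refine ⟨ε⁻¹, (one_lt_inv₀ hε0).mpr hε1, ?_⟩
    intro a ha
    have key : ∀ j : Fin d,
        0 < ‖mulVecE a (EuclideanSpace.single j (1:ℝ))‖ ∧
        ∀ i, ε * ‖mulVecE a (EuclideanSpace.single j (1:ℝ))‖ ≤ a i j ∧
          a i j ≤ ‖mulVecE a (EuclideanSpace.single j (1:ℝ))‖ := by
      intro j
      obtain ⟨⟨hnn, hn1⟩, hbd⟩ := h a ha _ (single_mem_Spos j)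
      set v := mulVecE a (EuclideanSpace.single j (1:ℝ)) with hv
      have hvne : v ≠ 0 := by
        intro hc
        have hp0 : proj a (EuclideanSpace.single j (1:ℝ)) = 0 := by
          show ‖v‖⁻¹ • v = 0
          rw [hc, smul_zero]
        rw [hp0] at hn1
        simp at hn1
      have hvn : 0 < ‖v‖ := norm_pos_iff.mpr hvne
      refine ⟨hvn, fun i => ⟨?_, ?_⟩⟩
      · have hb : ε ≤ ‖v‖⁻¹ * v i := hbd i
        have hvi : v i = a i j := mulVecE_single a j i
        calc ε * ‖v‖ ≤ (‖v‖⁻¹ * v i) * ‖v‖ :=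
              mul_le_mul_of_nonneg_right hb (le_of_lt hvn)
          _ = v i := by
              rw [mul_comm (‖v‖⁻¹) (v i), mul_assoc,
                inv_mul_cancel₀ (ne_of_gt hvn), mul_one]
          _ = a i j := hvi
      · rw [← mulVecE_single a j i]
        exact coord_le_norm' v i
    refine ⟨fun i j => ?_, fun j i i' => ?_⟩
    · obtain ⟨hvn, hk⟩ := key j
      exact lt_of_lt_of_le (mul_pos hε0 hvn) (hk i).1
    · obtain ⟨hvn, hk⟩ := key j
      calc a i j ≤ ‖mulVecE a (EuclideanSpace.single j (1:ℝ))‖ := (hk i).2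
        _ = ε⁻¹ * (ε * ‖mulVecE a (EuclideanSpace.single j (1:ℝ))‖) := by
            rw [← mul_assoc, inv_mul_cancel₀ (ne_of_gt hε0), one_mul]
        _ ≤ ε⁻¹ * a i' j :=
            mul_le_mul_of_nonneg_left (hk i').1 (le_of_lt (inv_pos.mpr hε0))

end PRM
end
end

section
/- Assume conditions (A1) and (A2), together with either condition (A3), or conditions (A4) and (A5'). Then for any s ∈ {0} ∪ I_μ° there exists a constant α > 0 such that sup_{f ∈ S₊^{d−1}} ∫_{S₊^{d−1}} ⟨f, x⟩^{−α} ν_s(dx) < ∞. In particular, for any s ∈ {0} ∪ I_μ° there exist constants α, C > 0 such that for all 0 < t < 1, sup_{f ∈ S₊^{d−1}} ν_s({x ∈ S₊^{d−1} : ⟨f, x⟩ ≤ t}) ≤ C t^α. Moreover, both assertions remain valid when ν_s is replaced by the stationary measure π_s defined by π_s(φ) = ν_s(φ r_s)/ν_s(r_s); for s = 0 one has ν_0 = π_0 = ν. -/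
open MeasureTheory ProbabilityTheory Filter Set Real Topology
open scoped ENNReal NNReal

noncomputable section

namespace PRM

variable (d : ℕ)

variable {d}

variable {Ω : Type*} [MeasurableSpace Ω]

/-- The interval `I_μ = {s ≥ 0 : E‖g₁‖^s < ∞}`. -/
def Imu {d : ℕ} {Ω : Type*} [MeasurableSpace Ω] (P : Measure Ω) (g : ℕ → Ω → Mat d) :
    Set ℝ :=
  {s | 0 ≤ s ∧ Integrable (fun ω => opN (g 1 ω) ^ s) P}

/-- `κ s`, `r s`, `νs s` are the dominating eigenvalue, eigenfunction and eigenmeasure of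
the transfer operator `P_s`. -/
def IsEigenSystem {d : ℕ} {Ω : Type*} [MeasurableSpace Ω] (P : Measure Ω)
    (g : ℕ → Ω → Mat d) (S : Set ℝ) (κ : ℝ → ℝ) (r : ℝ → Vec d → ℝ)
    (νs : ℝ → Measure (Vec d)) : Prop :=
  ∀ s ∈ S, 0 < κ s ∧ ContinuousOn (r s) (Spos d) ∧ (∀ x ∈ Spos d, 0 < r s x) ∧
    (∀ x ∈ Spos d,
      (∫ ω, ‖mulVecE (g 1 ω) x‖ ^ s * r s (proj (g 1 ω) x) ∂P) = κ s * r s x) ∧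
    IsProbabilityMeasure (νs s) ∧ νs s (Spos d) = 1 ∧
    ∀ φ : Vec d → ℝ, Continuous φ →
      (∫ x, (∫ ω, ‖mulVecE (g 1 ω) x‖ ^ s * φ (proj (g 1 ω) x) ∂P) ∂(νs s))
        = κ s * ∫ x, φ x ∂(νs s)


section AuxHolder

variable {d : ℕ}

instance instMatSC (d : ℕ) : SecondCountableTopology (Mat d) :=
  inferInstanceAs (SecondCountableTopology (Fin d → Fin d → ℝ))

instance instMatOM (d : ℕ) : OpensMeasurableSpace (Mat d) :=
  inferInstanceAs (OpensMeasurableSpace (Fin d → Fin d → ℝ))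

lemma continuous_coord (i : Fin d) : Continuous fun x : Vec d => x i :=
  (EuclideanSpace.proj (𝕜 := ℝ) i).continuous

lemma spos_sum_sq {x : Vec d} (hx : x ∈ Spos d) : ∑ i, (x i) ^ 2 = 1 := by
  have h := hx.2
  rw [EuclideanSpace.norm_eq] at h
  have h2 : ∑ i, ‖x i‖ ^ 2 = ∑ i, (x i) ^ 2 :=
    Finset.sum_congr rfl fun i _ => by rw [Real.norm_eq_abs, sq_abs]
  rw [h2] at h
  have hnn : 0 ≤ ∑ i, (x i) ^ 2 := Finset.sum_nonneg fun i _ => sq_nonneg _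
  calc ∑ i, (x i) ^ 2 = Real.sqrt (∑ i, (x i) ^ 2) ^ 2 := (Real.sq_sqrt hnn).symm
    _ = 1 := by rw [h]; norm_num

lemma spos_one_le_sum {f : Vec d} (hf : f ∈ Spos d) : 1 ≤ ∑ i, f i := by
  have h1 := spos_sum_sq hf
  have hS : 0 ≤ ∑ i, f i := Finset.sum_nonneg fun i _ => hf.1 i
  have h3 : (1:ℝ) ≤ (∑ i, f i) * (∑ i, f i) := by
    calc (1:ℝ) = ∑ i, (f i) ^ 2 := h1.symm
      _ ≤ ∑ i, f i * ∑ j, f j := by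
          refine Finset.sum_le_sum fun i _ => ?_
          have hle : f i ≤ ∑ j, f j :=
            Finset.single_le_sum (fun j _ => hf.1 j) (Finset.mem_univ i)
          calc (f i) ^ 2 = f i * f i := sq (f i)
            _ ≤ f i * ∑ j, f j := mul_le_mul_of_nonneg_left hle (hf.1 i)
      _ = (∑ i, f i) * (∑ i, f i) := by rw [← Finset.sum_mul]
  nlinarith

lemma spos_exists_pos {x : Vec d} (hx : x ∈ Spos d) : ∃ j, 0 < x j := by
  by_contra h
  push_neg at h
  have hz : ∀ j, x j = 0 := fun j => le_antisymm (h j) (hx.1 j)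
  have h0 : ∑ i, (x i) ^ 2 = 0 := Finset.sum_eq_zero fun i _ => by rw [hz i]; ring
  rw [spos_sum_sq hx] at h0
  exact one_ne_zero h0

lemma mulVecE_apply (a : Mat d) (x : Vec d) (i : Fin d) :
    mulVecE a x i = ∑ j, a i j * x j := rfl

lemma proj_apply (a : Mat d) (x : Vec d) (i : Fin d) :
    proj a x i = ‖mulVecE a x‖⁻¹ * mulVecE a x i := rfl

lemma proj_coord_ge {C : ℝ} (hC : 0 < C) {a : Mat d}
    (hpos : ∀ i j, 0 < a i j) (hcomp : ∀ j i i', a i j ≤ C * a i' j)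
    {x : Vec d} (hx : x ∈ Spos d) (i : Fin d) :
    (Real.sqrt d * C)⁻¹ ≤ proj a x i := by
  set y := mulVecE a x with hy
  obtain ⟨j0, hj0⟩ := spos_exists_pos hx
  have hyi : ∀ k, 0 < y k := by
    intro k
    rw [hy, mulVecE_apply]
    exact Finset.sum_pos' (fun j _ => mul_nonneg (hpos k j).le (hx.1 j))
      ⟨j0, Finset.mem_univ _, mul_pos (hpos k j0) hj0⟩
  have hbound : ∀ k, y k ≤ C * y i := by
    intro k
    rw [hy, mulVecE_apply, mulVecE_apply, Finset.mul_sum]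
    refine Finset.sum_le_sum fun j _ => ?_
    rw [← mul_assoc]
    exact mul_le_mul_of_nonneg_right (hcomp j k i) (hx.1 j)
  have hCy : 0 ≤ C * y i := mul_nonneg hC.le (hyi i).le
  have hnorm : ‖y‖ ≤ Real.sqrt d * (C * y i) := by
    rw [EuclideanSpace.norm_eq]
    have h1 : ∑ k, ‖y k‖ ^ 2 ≤ ∑ _k : Fin d, (C * y i) ^ 2 := by
      refine Finset.sum_le_sum fun k _ => ?_
      rw [Real.norm_eq_abs, sq_abs]
      exact pow_le_pow_left₀ (hyi k).le (hbound k) 2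
    have h2 : ∑ _k : Fin d, (C * y i) ^ 2 = (d : ℝ) * (C * y i) ^ 2 := by
      rw [Finset.sum_const, Finset.card_univ, Fintype.card_fin, nsmul_eq_mul]
    calc Real.sqrt (∑ k, ‖y k‖ ^ 2) ≤ Real.sqrt ((d : ℝ) * (C * y i) ^ 2) :=
          Real.sqrt_le_sqrt (by rw [← h2]; exact h1)
      _ = Real.sqrt d * (C * y i) := by
          rw [Real.sqrt_mul (Nat.cast_nonneg d), Real.sqrt_sq hCy]
  have hynorm : 0 < ‖y‖ := by
    refine norm_pos_iff.mpr fun h => (hyi i).ne' ?_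
    rw [h]; rfl
  have hd : 0 < Real.sqrt d := by
    have h0 : (0:ℝ) < d := by exact_mod_cast i.pos
    exact Real.sqrt_pos.mpr h0
  rw [proj_apply, ← hy]
  have hne : Real.sqrt d * C * y i ≠ 0 := ne_of_gt (mul_pos (mul_pos hd hC) (hyi i))
  have heq : (Real.sqrt d * C)⁻¹ = (Real.sqrt d * C * y i)⁻¹ * y i := by
    field_simp
    exact (div_self (hyi i).ne').symm
  rw [heq]
  refine mul_le_mul_of_nonneg_right ?_ (hyi i).le
  refine inv_anti₀ hynorm ?_
  rw [mul_assoc]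
  exact hnorm

lemma measSupp_compl_eq (m : Measure (Mat d)) :
    (measSupp m)ᶜ = ⋃₀ {U : Set (Mat d) | IsOpen U ∧ m U = 0} := by
  ext a
  simp only [Set.mem_compl_iff, measSupp, Set.mem_setOf_eq, Set.mem_sUnion]
  constructor
  · intro h
    push_neg at h
    obtain ⟨U, hU, haU, hmU⟩ := h
    exact ⟨U, ⟨hU, le_antisymm hmU zero_le⟩, haU⟩
  · rintro ⟨U, ⟨hU, hmU⟩, haU⟩ h
    have := h U hU haU
    rw [hmU] at this
    exact lt_irrefl 0 this

lemma measSupp_compl_isOpen (m : Measure (Mat d)) : IsOpen (measSupp m)ᶜ := by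
  rw [measSupp_compl_eq]
  exact isOpen_sUnion fun U hU => hU.1

lemma measSupp_compl_null (m : Measure (Mat d)) : m (measSupp m)ᶜ = 0 := by
  obtain ⟨T, hTc, hTsub, hTeq⟩ :=
    TopologicalSpace.isOpen_sUnion_countable {U : Set (Mat d) | IsOpen U ∧ m U = 0}
      (fun U hU => hU.1)
  rw [measSupp_compl_eq, ← hTeq]
  exact (measure_sUnion_null_iff hTc).mpr fun U hU => (hTsub hU).2

lemma isClosed_Spos : IsClosed (Spos d) := by
  have : Spos d = (⋂ i, {x : Vec d | 0 ≤ x i}) ∩ {x : Vec d | ‖x‖ = 1} := by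
    ext x; simp [Spos, Set.mem_iInter]
  rw [this]
  exact (isClosed_iInter fun i => isClosed_le continuous_const (continuous_coord i)).inter
    (isClosed_eq continuous_norm continuous_const)

lemma bounds_of_good {m : Measure (Vec d)} {c : ℝ} (hc : 0 < c) (hu : m Set.univ ≤ 1)
    (hG : m {x : Vec d | ∀ i, c < x i}ᶜ = 0) :
    (∃ α : ℝ, 0 < α ∧ ∃ M : ℝ≥0∞, M < ⊤ ∧ ∀ f ∈ Spos d,
      (∫⁻ x, (ENNReal.ofReal (∑ i, f i * x i))⁻¹ ^ α ∂m) ≤ M) ∧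
    (∃ α C : ℝ, 0 < α ∧ 0 < C ∧ ∀ t : ℝ, 0 < t → t < 1 → ∀ f ∈ Spos d,
      m {x | ∑ i, f i * x i ≤ t} ≤ ENNReal.ofReal (C * t ^ α)) := by
  have hkey : ∀ f ∈ Spos d, ∀ x : Vec d, (∀ i, c < x i) → c ≤ ∑ i, f i * x i := by
    intro f hf x hx
    calc c = 1 * c := (one_mul c).symm
      _ ≤ (∑ i, f i) * c := mul_le_mul_of_nonneg_right (spos_one_le_sum hf) hc.le
      _ = ∑ i, f i * c := by rw [Finset.sum_mul]
      _ ≤ ∑ i, f i * x i :=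
          Finset.sum_le_sum fun i _ => mul_le_mul_of_nonneg_left (hx i).le (hf.1 i)
  have hae : ∀ᵐ x ∂m, ∀ i, c < x i := by
    rw [ae_iff]
    simpa [Set.compl_setOf] using hG
  constructor
  · refine ⟨1, one_pos, (ENNReal.ofReal c)⁻¹,
      ENNReal.inv_lt_top.mpr (ENNReal.ofReal_pos.mpr hc), fun f hf => ?_⟩
    calc ∫⁻ x, (ENNReal.ofReal (∑ i, f i * x i))⁻¹ ^ (1:ℝ) ∂m
        ≤ ∫⁻ _x, (ENNReal.ofReal c)⁻¹ ∂m := by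
          refine lintegral_mono_ae ?_
          filter_upwards [hae] with x hx
          rw [ENNReal.rpow_one]
          exact ENNReal.inv_le_inv.mpr (ENNReal.ofReal_le_ofReal (hkey f hf x hx))
      _ = (ENNReal.ofReal c)⁻¹ * m Set.univ := lintegral_const _
      _ ≤ (ENNReal.ofReal c)⁻¹ * 1 := mul_le_mul_right hu _
      _ = (ENNReal.ofReal c)⁻¹ := mul_one _
  · refine ⟨1, c⁻¹, one_pos, inv_pos.mpr hc, fun t ht ht1 f hf => ?_⟩
    rcases lt_or_ge t c with h | h
    · have hsub : {x : Vec d | ∑ i, f i * x i ≤ t} ⊆ {x : Vec d | ∀ i, c < x i}ᶜ := by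
        intro x hx hxG
        exact absurd (le_trans (hkey f hf x hxG) hx) (not_le.mpr h)
      rw [measure_mono_null hsub hG]
      exact zero_le
    · calc m {x | ∑ i, f i * x i ≤ t} ≤ m Set.univ := measure_mono (Set.subset_univ _)
        _ ≤ 1 := hu
        _ ≤ ENNReal.ofReal (c⁻¹ * t ^ (1:ℝ)) := by
            rw [Real.rpow_one]
            refine ENNReal.one_le_ofReal.mpr ?_
            rw [← inv_mul_cancel₀ (ne_of_gt hc)]
            exact mul_le_mul_of_nonneg_left h (inv_pos.mpr hc).le

end AuxHolder

/-- **Proposition (Hölder regularity of the eigenmeasures `ν_s` and of the stationary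
measures `π_s`).** Assume (A1), (A2), and either (A3) or ((A4) and (A5')). For every
`s ∈ {0} ∪ I_μ°` there is `α > 0` with `sup_f ∫ ⟨f,x⟩^{−α} dν_s(x) < ∞`; in particular
there are `α, C > 0` with `ν_s({x : ⟨f,x⟩ ≤ t}) ≤ C t^α` for all `0 < t < 1`, uniformly
in `f`. The same holds for `π_s = ν_s(· r_s)/ν_s(r_s)`; for `s = 0`, `ν_0 = π_0 = ν`. -/
theorem holder_regularity_stationary_measure
    {d : ℕ} (hd : 2 ≤ d)
    {Ω : Type*} [MeasurableSpace Ω] (P : Measure Ω) [IsProbabilityMeasure P]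
    (g : ℕ → Ω → Mat d) (μm : Measure (Mat d)) [IsProbabilityMeasure μm]
    (hiid : IsIID P g μm)
    (ν : Measure (Vec d)) (hν : IsStatMeas P g ν)
    (hA1 : CondA1 P g) (hA2 : CondA2 μm)
    (hcond : CondA3 μm ∨ (CondA4 P g ∧ CondA5' μm ν))
    (κ : ℝ → ℝ) (r : ℝ → Vec d → ℝ) (νs : ℝ → Measure (Vec d))
    (heig : IsEigenSystem P g (insert (0 : ℝ) (interior (Imu P g))) κ r νs)
    (h0 : νs 0 = ν) :
    ∀ s ∈ insert (0 : ℝ) (interior (Imu P g)),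
      (∃ α : ℝ, 0 < α ∧ ∃ M : ℝ≥0∞, M < ⊤ ∧ ∀ f ∈ Spos d,
        (∫⁻ x, (ENNReal.ofReal (∑ i, f i * x i))⁻¹ ^ α ∂(νs s)) ≤ M) ∧
      (∃ α C : ℝ, 0 < α ∧ 0 < C ∧ ∀ t : ℝ, 0 < t → t < 1 → ∀ f ∈ Spos d,
        νs s {x | ∑ i, f i * x i ≤ t} ≤ ENNReal.ofReal (C * t ^ α)) ∧
      (∃ α : ℝ, 0 < α ∧ ∃ M : ℝ≥0∞, M < ⊤ ∧ ∀ f ∈ Spos d,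
        (∫⁻ x, (ENNReal.ofReal (∑ i, f i * x i))⁻¹ ^ α
            ∂((∫⁻ z, ENNReal.ofReal (r s z) ∂(νs s))⁻¹ •
                ((νs s).withDensity fun z => ENNReal.ofReal (r s z)))) ≤ M) ∧
      (∃ α C : ℝ, 0 < α ∧ 0 < C ∧ ∀ t : ℝ, 0 < t → t < 1 → ∀ f ∈ Spos d,
        ((∫⁻ z, ENNReal.ofReal (r s z) ∂(νs s))⁻¹ •
            ((νs s).withDensity fun z => ENNReal.ofReal (r s z)))
          {x | ∑ i, f i * x i ≤ t} ≤ ENNReal.ofReal (C * t ^ α)) := by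
  intro s hs
  rcases hcond with hA3 | ⟨_, hA5⟩
  · -- main case via (A3)
    obtain ⟨C0, hC1, hC⟩ := hA3
    have hC0 : (0:ℝ) < C0 := lt_trans one_pos hC1
    have hdR : (0:ℝ) < Real.sqrt d := by
      have : (0:ℝ) < d := by exact_mod_cast (lt_of_lt_of_le two_pos hd)
      exact Real.sqrt_pos.mpr this
    set δ : ℝ := (Real.sqrt d * C0)⁻¹ with hδdef
    have hδ : 0 < δ := by rw [hδdef]; positivity
    obtain ⟨hκ, hrcont, hrpos, hreig, hprob, hSpos1, hphi⟩ :=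
      heig s hs
    haveI := hprob
    -- a.e. ω the matrix g 1 ω lies in the support of μm
    have hsupp : ∀ᵐ ω ∂P, g 1 ω ∈ measSupp μm := by
      have hmap := hiid.2.1 1 le_rfl
      have hP : P ((g 1) ⁻¹' (measSupp μm)ᶜ) = μm (measSupp μm)ᶜ := by
        rw [← Measure.map_apply (hiid.1 1) (measSupp_compl_isOpen μm).measurableSet, hmap]
      rw [ae_iff]
      have : {ω | ¬ g 1 ω ∈ measSupp μm} = (g 1) ⁻¹' (measSupp μm)ᶜ := rfl
      rw [this, hP]
      exact measSupp_compl_null μm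
    -- a.e. x lies on the positive sphere
    have haeS : ∀ᵐ x ∂(νs s), x ∈ Spos d := by
      rw [ae_iff]
      have : {x : Vec d | ¬ x ∈ Spos d} = (Spos d)ᶜ := rfl
      rw [this, measure_compl isClosed_Spos.measurableSet
        (by rw [hSpos1]; exact ENNReal.one_ne_top), measure_univ, hSpos1, tsub_self]
    -- each coordinate is ν_s-a.s. bounded below by δ/2
    have hcoordnull : ∀ i : Fin d, νs s {x : Vec d | x i ≤ δ / 2} = 0 := by
      intro i
      set φ : Vec d → ℝ := fun x => max 0 (min 1 (2 - 2 * δ⁻¹ * x i)) with hφdef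
      have hφc : Continuous φ :=
        continuous_const.max (continuous_const.min
          (continuous_const.sub (continuous_const.mul (continuous_coord i))))
      have hφ01 : ∀ x, 0 ≤ φ x ∧ φ x ≤ 1 := fun x =>
        ⟨le_max_left _ _, max_le (by norm_num) (min_le_left _ _)⟩
      have hφ0 : ∀ x : Vec d, δ ≤ x i → φ x = 0 := by
        intro x hx
        have h2 : 2 * δ⁻¹ * δ ≤ 2 * δ⁻¹ * x i :=
          mul_le_mul_of_nonneg_left hx (by positivity)
        have h3 : 2 * δ⁻¹ * δ = 2 := by field_simp
        have h1 : 2 - 2 * δ⁻¹ * x i ≤ 0 := by linarith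
        show max 0 (min 1 (2 - 2 * δ⁻¹ * x i)) = 0
        rw [min_eq_right (by linarith), max_eq_left h1]
      have hφ1 : ∀ x : Vec d, x i ≤ δ / 2 → φ x = 1 := by
        intro x hx
        have h2 : 2 * δ⁻¹ * x i ≤ 2 * δ⁻¹ * (δ / 2) :=
          mul_le_mul_of_nonneg_left hx (by positivity)
        have h3 : 2 * δ⁻¹ * (δ / 2) = 1 := by field_simp
        have h1 : (1:ℝ) ≤ 2 - 2 * δ⁻¹ * x i := by linarith
        show max 0 (min 1 (2 - 2 * δ⁻¹ * x i)) = 1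
        rw [min_eq_left h1, max_eq_right (by norm_num)]
      have hid := hphi φ hφc
      have hinner : ∀ x ∈ Spos d,
          (∫ ω, ‖mulVecE (g 1 ω) x‖ ^ s * φ (proj (g 1 ω) x) ∂P) = 0 := by
        intro x hx
        refine integral_eq_zero_of_ae ?_
        filter_upwards [hsupp] with ω hω
        have hcmp := hC _ hω
        have hcoord : δ ≤ proj (g 1 ω) x i := by
          rw [hδdef]
          exact proj_coord_ge hC0 hcmp.1 (fun j i1 i2 => hcmp.2 j i1 i2) hx i
        simp [hφ0 _ hcoord]
      have hLHS : (∫ x, (∫ ω, ‖mulVecE (g 1 ω) x‖ ^ s * φ (proj (g 1 ω) x) ∂P)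
          ∂(νs s)) = 0 := by
        have hae0 : (fun x => ∫ ω, ‖mulVecE (g 1 ω) x‖ ^ s * φ (proj (g 1 ω) x) ∂P)
            =ᵐ[νs s] fun _ => (0:ℝ) := by
          filter_upwards [haeS] with x hx using hinner x hx
        rw [integral_congr_ae hae0, integral_zero]
      rw [hLHS] at hid
      have hint0 : ∫ x, φ x ∂(νs s) = 0 := by
        rcases mul_eq_zero.mp hid.symm with h | h
        · exact absurd h (ne_of_gt hκ)
        · exact h
      have hφint : Integrable φ (νs s) := by
        refine Integrable.mono' (integrable_const (1:ℝ)) hφc.aestronglyMeasurable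
          (ae_of_all _ fun x => ?_)
        rw [Real.norm_eq_abs, abs_of_nonneg (hφ01 x).1]
        exact (hφ01 x).2
      have hzero := (integral_eq_zero_iff_of_nonneg (fun x => (hφ01 x).1) hφint).mp hint0
      have hnull : νs s {x : Vec d | ¬ φ x = 0} = 0 := ae_iff.mp hzero
      refine measure_mono_null (fun x hx => ?_) hnull
      have : φ x = 1 := hφ1 x hx
      simp [this]
    -- the good set has full measure
    have hGν : νs s {x : Vec d | ∀ i, δ / 2 < x i}ᶜ = 0 := by
      refine measure_mono_null (fun x hx => ?_)
        (measure_iUnion_null (s := fun i => {x : Vec d | x i ≤ δ / 2}) hcoordnull)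
      simp only [Set.mem_compl_iff, Set.mem_setOf_eq, not_forall, not_lt] at hx
      obtain ⟨i, hi⟩ := hx
      exact Set.mem_iUnion.mpr ⟨i, hi⟩
    have hδ2 : (0:ℝ) < δ / 2 := by positivity
    obtain ⟨b1, b2⟩ := bounds_of_good hδ2 (le_of_eq measure_univ) hGν
    -- the π_s measure
    set c0 : ℝ≥0∞ := ∫⁻ z, ENNReal.ofReal (r s z) ∂(νs s) with hc0
    have hGmeas : MeasurableSet ({x : Vec d | ∀ i, δ / 2 < x i}ᶜ) := by
      refine MeasurableSet.compl ?_
      have : {x : Vec d | ∀ i, δ / 2 < x i} = ⋂ i, {x : Vec d | δ / 2 < x i} := by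
        ext x; simp [Set.mem_iInter]
      rw [this]
      exact MeasurableSet.iInter fun i =>
        (isOpen_lt continuous_const (continuous_coord i)).measurableSet
    have hπG : (c0⁻¹ • ((νs s).withDensity fun z => ENNReal.ofReal (r s z)))
        {x : Vec d | ∀ i, δ / 2 < x i}ᶜ = 0 := by
      rw [Measure.smul_apply, withDensity_apply _ hGmeas,
        setLIntegral_measure_zero _ _ hGν, smul_eq_mul, mul_zero]
    have hπu : (c0⁻¹ • ((νs s).withDensity fun z => ENNReal.ofReal (r s z)))
        Set.univ ≤ 1 := by
      rw [Measure.smul_apply, withDensity_apply _ MeasurableSet.univ,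
        setLIntegral_univ, smul_eq_mul, ← hc0]
      rcases eq_or_ne c0 0 with h | h
      · simp [h]
      rcases eq_or_ne c0 ⊤ with h2 | h2
      · simp [h2]
      · rw [ENNReal.inv_mul_cancel h h2]
    obtain ⟨b3, b4⟩ := bounds_of_good hδ2 hπu hπG
    exact ⟨b1, b2, b3, b4⟩
  · -- condition (A5') is contradictory: take φ = 0
    exfalso
    refine hA5 1 0 (fun _ => 0) one_pos le_rfl Real.two_pi_pos fun a _ x _ => ?_
    simp


end PRM
end
end

section
/- Assume condition (A3). Then there exists a constant ε ∈ (0, √2/2) such that for every n ≥ 1, every g₁, …, g_n ∈ supp μ and every x ∈ S₊^{d−1}, writing G_n = g_n⋯g_1: ρ(G_n) ≥ min_{1 ≤ i ≤ d} ⟨e_i, G_n x⟩ ≥ ε |G_n x|. Consequently, P-almost surely, ρ(G_n) ≥ ε |G_n x| for the i.i.d. product G_n = g_n⋯g_1. -/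
open MeasureTheory ProbabilityTheory Filter Set Real Topology
open scoped ENNReal NNReal

noncomputable section

namespace PRM

variable (d : ℕ)

variable {d}

variable {Ω : Type*} [MeasurableSpace Ω]

/-! ### Auxiliary lemmas -/

section Aux

variable {d : ℕ}

lemma aux_mulVec_nonneg {a : Mat d} (ha : ∀ i j, 0 ≤ a i j) {y : Fin d → ℝ}
    (hy : ∀ i, 0 ≤ y i) : ∀ i, 0 ≤ a.mulVec y i := by
  intro i
  simp only [Matrix.mulVec, dotProduct]
  exact Finset.sum_nonneg fun j _ => mul_nonneg (ha i j) (hy j)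

lemma aux_mulVec_mono {a : Mat d} (ha : ∀ i j, 0 ≤ a i j) {y z : Fin d → ℝ}
    (hyz : ∀ i, y i ≤ z i) : ∀ i, a.mulVec y i ≤ a.mulVec z i := by
  intro i
  simp only [Matrix.mulVec, dotProduct]
  exact Finset.sum_le_sum fun j _ => mul_le_mul_of_nonneg_left (hyz j) (ha i j)

lemma aux_list_prod_nonneg (l : List (Mat d)) (h : ∀ a ∈ l, ∀ i j, 0 ≤ a i j) :
    ∀ i j, 0 ≤ l.prod i j := by
  induction l with
  | nil =>
      intro i j
      simp only [List.prod_nil, Matrix.one_apply]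
      split <;> norm_num
  | cons a t ih =>
      intro i j
      simp only [List.prod_cons, Matrix.mul_apply]
      exact Finset.sum_nonneg fun k _ =>
        mul_nonneg (h a (List.mem_cons_self) i k)
          (ih (fun b hb => h b (List.mem_cons_of_mem a hb)) k j)

lemma aux_pow_nonneg {G : Mat d} (hG : ∀ i j, 0 ≤ G i j) :
    ∀ k : ℕ, ∀ i j, 0 ≤ (G ^ k) i j := by
  intro k
  induction k with
  | zero =>
      intro i j
      simp only [pow_zero, Matrix.one_apply]
      split <;> norm_num
  | succ k ih =>
      intro i j
      rw [pow_succ, Matrix.mul_apply]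
      exact Finset.sum_nonneg fun l _ => mul_nonneg (ih i l) (hG l j)

lemma aux_mulVecE_apply (gm : Mat d) (x : Vec d) (i : Fin d) :
    mulVecE gm x i = gm.mulVec x i := rfl

lemma aux_opN_bddAbove (gm : Mat d) :
    BddAbove (Set.range fun x : Spos d => ‖mulVecE gm (x : Vec d)‖) := by
  refine ⟨‖LinearMap.toContinuousLinearMap (Matrix.toEuclideanLin gm)‖, ?_⟩
  rintro r ⟨⟨x, hx⟩, rfl⟩
  have hx2 : ‖x‖ = 1 := hx.2
  have heq : mulVecE gm x = LinearMap.toContinuousLinearMap (Matrix.toEuclideanLin gm) x := rfl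
  calc ‖mulVecE gm x‖
      = ‖LinearMap.toContinuousLinearMap (Matrix.toEuclideanLin gm) x‖ := by rw [heq]
    _ ≤ ‖LinearMap.toContinuousLinearMap (Matrix.toEuclideanLin gm)‖ * ‖x‖ :=
        ContinuousLinearMap.le_opNorm _ _
    _ = ‖LinearMap.toContinuousLinearMap (Matrix.toEuclideanLin gm)‖ := by rw [hx2, mul_one]

/-- The deterministic core: for a nonempty list of matrices from a set with
(A3)-type column comparability, `ε |Gx| ≤ min_i (Gx)_i ≤ ρ(G)`. -/
lemma aux_core (hd : 2 ≤ d) {C : ℝ} (hC : 1 < C) {S : Set (Mat d)}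
    (hS : ∀ a ∈ S, (∀ i j : Fin d, 0 < a i j) ∧ ∀ j i i' : Fin d, a i j ≤ C * a i' j)
    (l : List (Mat d)) (hne : l ≠ []) (hl : ∀ a ∈ l, a ∈ S) (x : Vec d) (hx : x ∈ Spos d) :
    (C * Real.sqrt d)⁻¹ * ‖mulVecE l.prod x‖ ≤ (⨅ i : Fin d, mulVecE l.prod x i) ∧
      (⨅ i : Fin d, mulVecE l.prod x i) ≤ specRad l.prod := by
  haveI : Nonempty (Fin d) := ⟨⟨0, by omega⟩⟩
  have hC0 : (0:ℝ) < C := lt_trans one_pos hC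
  have hd0 : (0:ℝ) < Real.sqrt d := Real.sqrt_pos.2 (by exact_mod_cast (by omega : 0 < d))
  set G := l.prod with hG
  have hGnn : ∀ i j, 0 ≤ G i j :=
    aux_list_prod_nonneg l fun a ha i j => (hS a (hl a ha)).1 i j |>.le
  set v : Fin d → ℝ := G.mulVec x with hv
  have hv0 : ∀ i, 0 ≤ v i := aux_mulVec_nonneg hGnn hx.1
  -- column comparability of Gx
  have hcomp : ∀ i i' : Fin d, v i ≤ C * v i' := by
    obtain ⟨a, t, rfl⟩ := List.exists_cons_of_ne_nil hne
    have haS := hS a (hl a (List.mem_cons_self))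
    set y : Fin d → ℝ := t.prod.mulVec x with hy
    have hy0 : ∀ j, 0 ≤ y j :=
      aux_mulVec_nonneg
        (aux_list_prod_nonneg t fun b hb i j => (hS b (hl b (List.mem_cons_of_mem a hb))).1 i j |>.le)
        hx.1
    have hveq : v = a.mulVec y := by
      rw [hv, hG, List.prod_cons, hy, ← Matrix.mulVec_mulVec]
    intro i i'
    rw [hveq]
    calc a.mulVec y i = ∑ j, a i j * y j := by
          simp only [Matrix.mulVec, dotProduct]
      _ ≤ ∑ j, C * a i' j * y j := by
          refine Finset.sum_le_sum fun j _ => ?_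
          exact mul_le_mul_of_nonneg_right (haS.2 j i i') (hy0 j)
      _ = C * ∑ j, a i' j * y j := by rw [Finset.mul_sum]; exact Finset.sum_congr rfl fun j _ => by ring
      _ = C * a.mulVec y i' := by
          simp only [Matrix.mulVec, dotProduct]
  -- norm of x: sum of squares is 1, coordinates at most 1
  have hsum : ∑ j, x j ^ 2 = 1 := by
    have h := hx.2
    rw [EuclideanSpace.norm_eq] at h
    have h' : Real.sqrt (∑ j, x j ^ 2) = 1 := by
      rw [← h]
      congr 1
      exact Finset.sum_congr rfl fun j _ => by rw [Real.norm_eq_abs, sq_abs]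
    have hnn : (0:ℝ) ≤ ∑ j, x j ^ 2 := Finset.sum_nonneg fun j _ => sq_nonneg _
    nlinarith [Real.sq_sqrt hnn, h']
  have hx1 : ∀ i, x i ≤ 1 := by
    intro i
    have h1 : x i ^ 2 ≤ 1 := by
      rw [← hsum]
      exact Finset.single_le_sum (fun j _ => sq_nonneg (x j)) (Finset.mem_univ i)
    nlinarith [hx.1 i]
  -- Part 1
  have part1 : (C * Real.sqrt d)⁻¹ * ‖mulVecE G x‖ ≤ ⨅ i : Fin d, mulVecE G x i := by
    refine le_ciInf fun i' => ?_
    have hci' : (0:ℝ) ≤ C * v i' := mul_nonneg hC0.le (hv0 i')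
    have hnorm : ‖mulVecE G x‖ ≤ Real.sqrt d * (C * v i') := by
      rw [EuclideanSpace.norm_eq]
      have hle : ∑ i, ‖mulVecE G x i‖ ^ 2 ≤ (d : ℝ) * (C * v i') ^ 2 := by
        calc ∑ i, ‖mulVecE G x i‖ ^ 2 ≤ ∑ _i : Fin d, (C * v i') ^ 2 := by
              refine Finset.sum_le_sum fun i _ => ?_
              rw [aux_mulVecE_apply, Real.norm_eq_abs, sq_abs]
              have := hcomp i i'
              nlinarith [hv0 i]
          _ = (d : ℝ) * (C * v i') ^ 2 := by
              rw [Finset.sum_const, Finset.card_univ, Fintype.card_fin, nsmul_eq_mul]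
      calc Real.sqrt (∑ i, ‖mulVecE G x i‖ ^ 2) ≤ Real.sqrt ((d : ℝ) * (C * v i') ^ 2) :=
            Real.sqrt_le_sqrt hle
        _ = Real.sqrt d * (C * v i') := by
            rw [Real.sqrt_mul (by positivity), Real.sqrt_sq hci']
    have key : (C * Real.sqrt d)⁻¹ * (Real.sqrt d * (C * v i')) = v i' := by
      field_simp
    calc (C * Real.sqrt d)⁻¹ * ‖mulVecE G x‖
        ≤ (C * Real.sqrt d)⁻¹ * (Real.sqrt d * (C * v i')) :=
          mul_le_mul_of_nonneg_left hnorm (by positivity)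
      _ = v i' := key
      _ = mulVecE G x i' := rfl
  -- Part 2
  have part2 : (⨅ i : Fin d, mulVecE G x i) ≤ specRad G := by
    set m : ℝ := ⨅ i : Fin d, mulVecE G x i with hm
    have hm0 : 0 ≤ m := le_ciInf fun i => hv0 i
    have hmv : ∀ i, m ≤ v i := fun i => ciInf_le (Set.finite_range _).bddBelow i
    have hiter : ∀ k : ℕ, ∀ i, m ^ k * x i ≤ (G ^ k).mulVec x i := by
      intro k
      induction k with
      | zero => intro i; simp [Matrix.one_mulVec]
      | succ k ih =>
          intro i
          have hstep : G.mulVec (fun j => m ^ k * x j) i = m ^ k * v i := by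
            simp only [hv, Matrix.mulVec, dotProduct, Finset.mul_sum]
            exact Finset.sum_congr rfl fun j _ => by ring
          calc m ^ (k + 1) * x i = m ^ k * (m * x i) := by ring
            _ ≤ m ^ k * v i := by
                refine mul_le_mul_of_nonneg_left ?_ (pow_nonneg hm0 k)
                calc m * x i ≤ m * 1 := mul_le_mul_of_nonneg_left (hx1 i) hm0
                  _ = m := mul_one m
                  _ ≤ v i := hmv i
            _ = G.mulVec (fun j => m ^ k * x j) i := hstep.symm
            _ ≤ G.mulVec ((G ^ k).mulVec x) i := aux_mulVec_mono hGnn ih i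
            _ = (G ^ (k + 1)).mulVec x i := by
                rw [Matrix.mulVec_mulVec, ← pow_succ']
    have hpow : ∀ k : ℕ, 0 < k → m ≤ opN (G ^ k) ^ ((k : ℝ))⁻¹ := by
      intro k hk
      have hknorm : m ^ k ≤ ‖mulVecE (G ^ k) x‖ := by
        have hmk : (0:ℝ) ≤ m ^ k := pow_nonneg hm0 k
        have h1 : ∑ i, (m ^ k * x i) ^ 2 = (m ^ k) ^ 2 := by
          calc ∑ i, (m ^ k * x i) ^ 2 = (m ^ k) ^ 2 * ∑ i, x i ^ 2 := by
                rw [Finset.mul_sum]; exact Finset.sum_congr rfl fun i _ => by ring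
            _ = (m ^ k) ^ 2 := by rw [hsum, mul_one]
        have h2 : ∑ i, (m ^ k * x i) ^ 2 ≤ ∑ i, ‖mulVecE (G ^ k) x i‖ ^ 2 := by
          refine Finset.sum_le_sum fun i _ => ?_
          rw [aux_mulVecE_apply, Real.norm_eq_abs, sq_abs]
          have hlow := hiter k i
          have hge0 : 0 ≤ m ^ k * x i := mul_nonneg hmk (hx.1 i)
          nlinarith
        rw [EuclideanSpace.norm_eq]
        calc m ^ k = Real.sqrt ((m ^ k) ^ 2) := (Real.sqrt_sq hmk).symm
          _ = Real.sqrt (∑ i, (m ^ k * x i) ^ 2) := by rw [h1]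
          _ ≤ Real.sqrt (∑ i, ‖mulVecE (G ^ k) x i‖ ^ 2) := Real.sqrt_le_sqrt h2
      have hop : m ^ k ≤ opN (G ^ k) :=
        le_trans hknorm (le_ciSup (aux_opN_bddAbove (G ^ k)) (⟨x, hx⟩ : Spos d))
      have hkne : ((k : ℕ) : ℝ) ≠ 0 := Nat.cast_ne_zero.2 hk.ne'
      calc m = (m ^ k) ^ (((k : ℕ) : ℝ))⁻¹ := by
            rw [← Real.rpow_natCast m k, ← Real.rpow_mul hm0, mul_inv_cancel₀ hkne,
              Real.rpow_one]
        _ ≤ opN (G ^ k) ^ (((k : ℕ) : ℝ))⁻¹ :=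
            Real.rpow_le_rpow (pow_nonneg hm0 k) hop (by positivity)
    haveI : Nonempty {k : ℕ // 0 < k} := ⟨⟨1, one_pos⟩⟩
    refine le_ciInf fun k => hpow k.1 k.2
  exact ⟨part1, part2⟩

lemma aux_measSupp_compl_eq {α : Type*} [TopologicalSpace α] [MeasurableSpace α]
    (m : Measure α) : (measSupp m)ᶜ = ⋃₀ {U : Set α | IsOpen U ∧ m U = 0} := by
  ext a
  simp only [Set.mem_compl_iff, measSupp, Set.mem_setOf_eq, Set.mem_sUnion]
  constructor
  · intro h
    push_neg at h
    obtain ⟨U, hUo, haU, hU0⟩ := h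
    exact ⟨U, ⟨hUo, le_zero_iff.mp hU0⟩, haU⟩
  · rintro ⟨U, ⟨hUo, hU0⟩, haU⟩ h
    exact absurd hU0 (h U hUo haU).ne'

lemma aux_measSupp_compl_isOpen {α : Type*} [TopologicalSpace α] [MeasurableSpace α]
    (m : Measure α) : IsOpen (measSupp m)ᶜ := by
  rw [aux_measSupp_compl_eq]
  exact isOpen_sUnion fun U hU => hU.1

lemma aux_measSupp_compl_null {α : Type*} [TopologicalSpace α] [MeasurableSpace α]
    [SecondCountableTopology α] (m : Measure α) : m (measSupp m)ᶜ = 0 := by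
  obtain ⟨T, hTc, hTsub, hTU⟩ := TopologicalSpace.isOpen_sUnion_countable
    {U : Set α | IsOpen U ∧ m U = 0} (fun U hU => hU.1)
  refine measure_mono_null ?_ ((measure_sUnion_null_iff hTc).2 fun s hs => (hTsub hs).2)
  rw [hTU, ← aux_measSupp_compl_eq]

lemma aux_gprod_eq {Ω : Type*} (g : ℕ → Ω → Mat d) (n : ℕ) (ω : Ω) :
    Gprod g n ω = (List.ofFn fun i : Fin n => g ((i : ℕ) + 1) ω).reverse.prod := by
  unfold Gprod
  congr 1
  apply List.ext_getElem
  · simp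
  · intro k hk hk'
    have hkn : k < n := by simpa using hk
    simp only [List.getElem_map, List.getElem_range, List.getElem_reverse, List.getElem_ofFn,
      List.length_reverse, List.length_ofFn]
    have h : n - k = n - 1 - k + 1 := by omega
    rw [h]

end Aux

/-- **Lemma (Collatz–Wielandt lower bound for the spectral radius under (A3)).**
Assume (A3). There is `ε ∈ (0, √2/2)` such that for all `n ≥ 1`, all
`g₁, …, g_n ∈ supp μ` and all `x ∈ S₊^{d−1}`, with `G_n = g_n ⋯ g₁`,
`ρ(G_n) ≥ min_i ⟨e_i, G_n x⟩ ≥ ε |G_n x|`. Consequently, `P`-a.s.,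
`ρ(G_n) ≥ ε |G_n x|` for the i.i.d. product `G_n = g_n ⋯ g₁`. -/
theorem spectral_radius_lower_bound
    {d : ℕ} (hd : 2 ≤ d)
    {Ω : Type*} [MeasurableSpace Ω] (P : Measure Ω) [IsProbabilityMeasure P]
    (g : ℕ → Ω → Mat d) (μm : Measure (Mat d)) [IsProbabilityMeasure μm]
    (hiid : IsIID P g μm)
    (hA3 : CondA3 μm) :
    ∃ ε : ℝ, 0 < ε ∧ ε < Real.sqrt 2 / 2 ∧
      (∀ n : ℕ, 1 ≤ n → ∀ gs : Fin n → Mat d, (∀ i, gs i ∈ measSupp μm) →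
        ∀ x ∈ Spos d,
          ε * ‖mulVecE ((List.ofFn gs).reverse.prod) x‖
              ≤ ⨅ i : Fin d, mulVecE ((List.ofFn gs).reverse.prod) x i ∧
            (⨅ i : Fin d, mulVecE ((List.ofFn gs).reverse.prod) x i)
              ≤ specRad ((List.ofFn gs).reverse.prod)) ∧
      (∀ n : ℕ, 1 ≤ n → ∀ᵐ ω ∂P, ∀ x ∈ Spos d,
        ε * ‖mulVecE (Gprod g n ω) x‖ ≤ specRad (Gprod g n ω)) := by
  classical
  obtain ⟨C, hC, hA3'⟩ := hA3
  haveI : Nonempty (Fin d) := ⟨⟨0, by omega⟩⟩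
  have hC0 : (0:ℝ) < C := lt_trans one_pos hC
  have hd0 : (0:ℝ) < Real.sqrt d := Real.sqrt_pos.2 (by exact_mod_cast (by omega : 0 < d))
  have hs2 : (0:ℝ) < Real.sqrt 2 := Real.sqrt_pos.2 (by norm_num)
  have h2 : Real.sqrt 2 * Real.sqrt 2 = 2 := Real.mul_self_sqrt (by norm_num)
  -- the deterministic statement, packaged
  have hdet : ∀ n : ℕ, 1 ≤ n → ∀ gs : Fin n → Mat d, (∀ i, gs i ∈ measSupp μm) →
      ∀ x ∈ Spos d,
        (C * Real.sqrt d)⁻¹ * ‖mulVecE ((List.ofFn gs).reverse.prod) x‖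
            ≤ (⨅ i : Fin d, mulVecE ((List.ofFn gs).reverse.prod) x i) ∧
          (⨅ i : Fin d, mulVecE ((List.ofFn gs).reverse.prod) x i)
            ≤ specRad ((List.ofFn gs).reverse.prod) := by
    intro n hn gs hgs x hx
    have hne : (List.ofFn gs).reverse ≠ [] := by
      intro h
      have := congrArg List.length h
      simp at this
      omega
    have hl : ∀ a ∈ (List.ofFn gs).reverse, a ∈ measSupp μm := by
      intro a ha
      rw [List.mem_reverse] at ha
      obtain ⟨i, hi⟩ := List.mem_ofFn.1 ha
      exact hi ▸ hgs i
    exact aux_core hd hC (fun a ha => hA3' a ha) _ hne hl x hx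
  refine ⟨(C * Real.sqrt d)⁻¹, by positivity, ?_, fun n hn gs hgs x hx => hdet n hn gs hgs x hx, ?_⟩
  · -- ε < √2 / 2
    have hdd : Real.sqrt 2 ≤ Real.sqrt d := Real.sqrt_le_sqrt (by exact_mod_cast hd)
    have hlt : Real.sqrt 2 < C * Real.sqrt d := by nlinarith
    have hinv : (C * Real.sqrt d)⁻¹ < (Real.sqrt 2)⁻¹ := by
      exact inv_strictAnti₀ hs2 hlt
    have hid : (Real.sqrt 2)⁻¹ = Real.sqrt 2 / 2 := by
      rw [inv_eq_one_div, div_eq_div_iff hs2.ne' (by norm_num : (2:ℝ) ≠ 0)]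
      nlinarith
    rw [← hid]
    exact hinv
  · -- the almost sure statement
    intro n hn
    haveI : SecondCountableTopology (Mat d) :=
      inferInstanceAs (SecondCountableTopology (Fin d → Fin d → ℝ))
    haveI : OpensMeasurableSpace (Mat d) :=
      inferInstanceAs (OpensMeasurableSpace (Fin d → Fin d → ℝ))
    have hmeas : ∀ k : Fin n, ∀ᵐ ω ∂P, g ((k : ℕ) + 1) ω ∈ measSupp μm := by
      intro k
      have hmapk := hiid.2.1 ((k : ℕ) + 1) (by omega)
      have hcm : MeasurableSet ((measSupp μm)ᶜ) :=
        (aux_measSupp_compl_isOpen μm).measurableSet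
      have hz : P (g ((k : ℕ) + 1) ⁻¹' (measSupp μm)ᶜ) = 0 := by
        rw [← Measure.map_apply (hiid.1 _) hcm, hmapk]
        exact aux_measSupp_compl_null μm
      rw [ae_iff]
      exact hz
    have hall : ∀ᵐ ω ∂P, ∀ k : Fin n, g ((k : ℕ) + 1) ω ∈ measSupp μm := ae_all_iff.2 hmeas
    filter_upwards [hall] with ω hω x hx
    have hGe : Gprod g n ω = (List.ofFn fun i : Fin n => g ((i : ℕ) + 1) ω).reverse.prod :=
      aux_gprod_eq g n ω
    obtain ⟨h1, h2⟩ := hdet n hn (fun i : Fin n => g ((i : ℕ) + 1) ω) hω x hx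
    rw [hGe]
    exact le_trans h1 h2

end PRM
end
end
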